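/- Let 𝒳 = ∏_{i=1}^n 𝒳_i and let p(y_j|x), j ∈ [m], be m privacy channels on 𝒳 such that channel j is (b,δ_j)-balanced and satisfies ε_j-information privacy with respect to ℙ_b. Then the composed channel p(y|x) = ∏_{j∈[m]} p(y_j|x) satisfies (Σ_{j∈[m]} δ_j)-composition privacy with respect to ℙ_b; that is, its individual channel capacity with respect to ℙ_b satisfies sup_{X∈ℙ_b, i∈[n]} I(X_i;(Y_1,…,Y_m)) ≤ Σ_{j∈[m]} ε_j + Σ_{j∈[m]} δ_j. -/

import Mathlib

set_option linter.unusedSectionVars false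
set_option linter.unusedVariables false
set_option maxHeartbeats 1000000


open scoped BigOperators

/-- `p` is a probability mass function on the finite type `Ω`. -/
def IsPMF {Ω : Type*} [Fintype Ω] (p : Ω → ℝ) : Prop :=
  (∀ x, 0 ≤ p x) ∧ ∑ x, p x = 1

/-- A (privacy) channel: every row is a probability distribution on the output set. -/
def IsChannel {Ω 𝒴 : Type*} [Fintype Ω] [Fintype 𝒴] (W : Ω → 𝒴 → ℝ) : Prop :=
  ∀ x, IsPMF (W x)

/-- Shannon entropy (base 2). -/
noncomputable def entropy {Ω : Type*} [Fintype Ω] (p : Ω → ℝ) : ℝ :=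
  -∑ x, p x * Real.logb 2 (p x)

/-- Mutual information (base 2) of a joint distribution on `α × β`. -/
noncomputable def mutualInfo {α β : Type*} [Fintype α] [Fintype β] (j : α × β → ℝ) : ℝ :=
  ∑ a, ∑ b, j (a, b) *
    Real.logb 2 (j (a, b) / ((∑ b', j (a, b')) * (∑ a', j (a', b))))

/-- Joint distribution of `f(X)` and the output `Y` of channel `U` with input `X ∼ p`. -/
noncomputable def jointMapOut {Ω γ 𝒴 : Type*} [Fintype Ω] [Fintype γ] [DecidableEq γ]
    [Fintype 𝒴] (p : Ω → ℝ) (U : Ω → 𝒴 → ℝ) (f : Ω → γ) : γ × 𝒴 → ℝ :=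
  fun z => ∑ x, if f x = z.1 then p x * U x z.2 else 0

/-- The set of all probability distributions on `Ω`. -/
def allPMF (Ω : Type*) [Fintype Ω] : Set (Ω → ℝ) := {p | IsPMF p}

/-- The set of all probability distributions on `Ω` with Shannon entropy at least `b`. -/
def PMFb (Ω : Type*) [Fintype Ω] (b : ℝ) : Set (Ω → ℝ) := {p | IsPMF p ∧ b ≤ entropy p}

/-- Individual channel capacity of the channel `W` with respect to a set `Δ` of
input distributions: the sup over `X ∈ Δ` and coordinates `i` of `I(X_i; Y)`. -/
noncomputable def indCap {n : ℕ} {𝒳 : Fin n → Type*} [∀ i, Fintype (𝒳 i)]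
    [∀ i, DecidableEq (𝒳 i)] {𝒴 : Type*} [Fintype 𝒴]
    (W : (∀ i, 𝒳 i) → 𝒴 → ℝ) (Δ : Set ((∀ i, 𝒳 i) → ℝ)) : ℝ :=
  sSup {r | ∃ p ∈ Δ, ∃ i : Fin n, r = mutualInfo (jointMapOut p W (fun x => x i))}


lemma jointMapOut_nonneg {Ω γ 𝒴 : Type*} [Fintype Ω] [Fintype γ] [DecidableEq γ]
    [Fintype 𝒴] {p : Ω → ℝ} (hp : ∀ x, 0 ≤ p x) {U : Ω → 𝒴 → ℝ}
    (hU : ∀ x y, 0 ≤ U x y) (f : Ω → γ) (z : γ × 𝒴) : 0 ≤ jointMapOut p U f z := by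
  refine Finset.sum_nonneg fun x _ => ?_
  split_ifs
  · exact mul_nonneg (hp x) (hU x z.2)
  · exact le_refl 0

lemma mutualInfo_relabel {α β β' : Type*} [Fintype α] [Fintype β] [Fintype β']
    (j : α × β → ℝ) (e : β' ≃ β) :
    mutualInfo (fun z : α × β' => j (z.1, e z.2)) = mutualInfo j := by
  unfold mutualInfo
  refine Finset.sum_congr rfl fun a _ => ?_
  rw [← Equiv.sum_comp e (fun b => j (a, b) *
    Real.logb 2 (j (a, b) / ((∑ b', j (a, b')) * (∑ a', j (a', b)))))]
  refine Finset.sum_congr rfl fun b' _ => ?_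
  simp only
  rw [Equiv.sum_comp e (fun b => j (a, b))]

lemma neg_mul_log_le {t : ℝ} (ht : 0 ≤ t) : -(t * Real.log t) ≤ (Real.exp 1)⁻¹ := by
  rcases eq_or_lt_of_le ht with h | h
  · simp [← h]; positivity
  · have he : (0:ℝ) < Real.exp 1 := Real.exp_pos 1
    have h1 : 0 < (Real.exp 1 * t)⁻¹ := by positivity
    have h2 := Real.log_le_sub_one_of_pos h1
    rw [Real.log_inv, Real.log_mul (ne_of_gt he) (ne_of_gt h), Real.log_exp] at h2
    have h3 : -(1 + Real.log t) ≤ (Real.exp 1 * t)⁻¹ - 1 := h2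
    have h4 : -Real.log t ≤ (Real.exp 1 * t)⁻¹ := by linarith
    have h5 : t * -Real.log t ≤ t * (Real.exp 1 * t)⁻¹ :=
      mul_le_mul_of_nonneg_left h4 ht
    have h6 : t * (Real.exp 1 * t)⁻¹ = (Real.exp 1)⁻¹ := by
      rw [mul_inv]; field_simp
    rw [h6] at h5
    nlinarith

lemma mutualInfo_le_bound {α β : Type*} [Fintype α] [Fintype β]
    (j : α × β → ℝ) (hj : ∀ z, 0 ≤ j z) :
    mutualInfo j ≤ (Fintype.card β : ℝ) * ((Real.exp 1) * Real.log 2)⁻¹ := by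
  have hlog2 : (0:ℝ) < Real.log 2 := Real.log_pos one_lt_two
  rw [mutualInfo, Finset.sum_comm]
  have key : ∀ b : β, (∑ a, j (a, b) *
      Real.logb 2 (j (a, b) / ((∑ b', j (a, b')) * (∑ a', j (a', b)))))
      ≤ ((Real.exp 1) * Real.log 2)⁻¹ := by
    intro b
    set m2 : ℝ := ∑ a', j (a', b) with hm2
    have hm2n : 0 ≤ m2 := Finset.sum_nonneg fun a _ => hj _
    have step : ∀ a : α, j (a, b) *
        Real.logb 2 (j (a, b) / ((∑ b', j (a, b')) * m2))
        ≤ j (a, b) * Real.logb 2 m2⁻¹ := by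
      intro a
      rcases eq_or_lt_of_le (hj (a, b)) with h0 | hpos
      · rw [← h0]; simp
      · have hm1 : j (a, b) ≤ ∑ b', j (a, b') :=
          Finset.single_le_sum (fun b' _ => hj (a, b')) (Finset.mem_univ b)
        have hm1p : 0 < ∑ b', j (a, b') := lt_of_lt_of_le hpos hm1
        have hm2p : 0 < m2 := lt_of_lt_of_le hpos
          (Finset.single_le_sum (fun a' _ => hj (a', b)) (Finset.mem_univ a))
        have harg : j (a, b) / ((∑ b', j (a, b')) * m2) ≤ m2⁻¹ := by
          rw [div_le_iff₀ (by positivity)]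
          calc j (a, b) ≤ ∑ b', j (a, b') := hm1
            _ = m2⁻¹ * ((∑ b', j (a, b')) * m2) := by
                field_simp
        refine mul_le_mul_of_nonneg_left ?_ (le_of_lt hpos)
        exact Real.logb_le_logb_of_le one_lt_two (by positivity) harg
    calc (∑ a, j (a, b) * Real.logb 2 (j (a, b) / ((∑ b', j (a, b')) * m2)))
        ≤ ∑ a, j (a, b) * Real.logb 2 m2⁻¹ := Finset.sum_le_sum fun a _ => step a
      _ = m2 * Real.logb 2 m2⁻¹ := by rw [← Finset.sum_mul]
      _ = -(m2 * Real.log m2) / Real.log 2 := by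
          rw [Real.logb, Real.log_inv]; ring
      _ ≤ (Real.exp 1)⁻¹ / Real.log 2 := by
          exact div_le_div₀ (by positivity) (neg_mul_log_le hm2n) hlog2 le_rfl
      _ = ((Real.exp 1) * Real.log 2)⁻¹ := by rw [mul_inv, div_eq_mul_inv]
  calc (∑ b, ∑ a, j (a, b) *
      Real.logb 2 (j (a, b) / ((∑ b', j (a, b')) * (∑ a', j (a', b)))))
      ≤ ∑ _b : β, ((Real.exp 1) * Real.log 2)⁻¹ := Finset.sum_le_sum fun b _ => key b
    _ = (Fintype.card β : ℝ) * ((Real.exp 1) * Real.log 2)⁻¹ := by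
        rw [Finset.sum_const, Finset.card_univ, nsmul_eq_mul]

namespace CompAux

variable {Ω γ A B : Type*} [Fintype Ω] [Fintype γ] [DecidableEq γ] [Fintype A] [Fintype B]

noncomputable def JJ (p : Ω → ℝ) (U : Ω → A → ℝ) (V : Ω → B → ℝ) (f : Ω → γ)
    (t : γ) (a : A) (b : B) : ℝ :=
  ∑ x, if f x = t then p x * (U x a * V x b) else 0

noncomputable def J1 (p : Ω → ℝ) (U : Ω → A → ℝ) (f : Ω → γ) (t : γ) (a : A) : ℝ :=
  ∑ x, if f x = t then p x * U x a else 0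

noncomputable def Pmarg (p : Ω → ℝ) (U : Ω → A → ℝ) (a : A) : ℝ := ∑ x, p x * U x a

noncomputable def Rm (p : Ω → ℝ) (U : Ω → A → ℝ) (V : Ω → B → ℝ) (a : A) (b : B) : ℝ :=
  ∑ x, p x * (U x a * V x b)

noncomputable def Pim (p : Ω → ℝ) (f : Ω → γ) (t : γ) : ℝ :=
  ∑ x, if f x = t then p x else 0

section facts
variable {p : Ω → ℝ} {U : Ω → A → ℝ} {V : Ω → B → ℝ} {f : Ω → γ}

lemma JJ_nonneg (hp : ∀ x, 0 ≤ p x) (hU : ∀ x a, 0 ≤ U x a) (hV : ∀ x b, 0 ≤ V x b)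
    (t : γ) (a : A) (b : B) : 0 ≤ JJ p U V f t a b := by
  refine Finset.sum_nonneg fun x _ => ?_
  split_ifs
  · exact mul_nonneg (hp x) (mul_nonneg (hU x a) (hV x b))
  · exact le_rfl

lemma J1_nonneg (hp : ∀ x, 0 ≤ p x) (hU : ∀ x a, 0 ≤ U x a) (t : γ) (a : A) :
    0 ≤ J1 p U f t a := by
  refine Finset.sum_nonneg fun x _ => ?_
  split_ifs
  · exact mul_nonneg (hp x) (hU x a)
  · exact le_rfl

lemma F1 (hV : IsChannel V) (t : γ) (a : A) : ∑ b, JJ p U V f t a b = J1 p U f t a := by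
  unfold JJ J1
  rw [Finset.sum_comm]
  refine Finset.sum_congr rfl fun x _ => ?_
  by_cases h : f x = t
  · simp only [if_pos h]
    have : ∀ b, p x * (U x a * V x b) = (p x * U x a) * V x b := fun b => by ring
    simp_rw [this]
    rw [← Finset.mul_sum, (hV x).2, mul_one]
  · simp [h]

lemma F2 (a : A) : ∑ t, J1 p U f t a = Pmarg p U a := by
  unfold J1 Pmarg
  rw [Finset.sum_comm]
  exact Finset.sum_congr rfl fun x _ => by simp

lemma F3 (a : A) (b : B) : ∑ t, JJ p U V f t a b = Rm p U V a b := by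
  unfold JJ Rm
  rw [Finset.sum_comm]
  exact Finset.sum_congr rfl fun x _ => by simp

lemma F4 (hU : IsChannel U) (t : γ) : ∑ a, J1 p U f t a = Pim p f t := by
  unfold J1 Pim
  rw [Finset.sum_comm]
  refine Finset.sum_congr rfl fun x _ => ?_
  by_cases h : f x = t
  · simp only [if_pos h]
    rw [← Finset.mul_sum, (hU x).2, mul_one]
  · simp [h]

lemma F5 (hU : IsChannel U) (hV : IsChannel V) (t : γ) :
    ∑ ab : A × B, JJ p U V f t ab.1 ab.2 = Pim p f t := by
  rw [Fintype.sum_prod_type]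
  simp_rw [F1 hV]
  exact F4 hU t

lemma pos_facts (hp : ∀ x, 0 ≤ p x) (hU : IsChannel U) (hV : IsChannel V)
    {t : γ} {a : A} {b : B} (h : 0 < JJ p U V f t a b) :
    0 < J1 p U f t a ∧ 0 < Pim p f t ∧ 0 < Pmarg p U a ∧ 0 < Rm p U V a b := by
  have hUn : ∀ x a, 0 ≤ U x a := fun x a => (hU x).1 a
  have hVn : ∀ x b, 0 ≤ V x b := fun x b => (hV x).1 b
  have hJn := fun t a b => JJ_nonneg (p := p) (U := U) (V := V) (f := f) hp hUn hVn t a b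
  have hJ1n := fun t a => J1_nonneg (p := p) (U := U) (f := f) hp hUn t a
  have h1 : JJ p U V f t a b ≤ J1 p U f t a := by
    rw [← F1 (p := p) (U := U) hV t a]
    exact Finset.single_le_sum (fun b' _ => hJn t a b') (Finset.mem_univ b)
  have hK1p : 0 < J1 p U f t a := lt_of_lt_of_le h h1
  have h2 : J1 p U f t a ≤ Pim p f t := by
    rw [← F4 (p := p) hU t]
    exact Finset.single_le_sum (fun a' _ => hJ1n t a') (Finset.mem_univ a)
  have h3 : J1 p U f t a ≤ Pmarg p U a := by
    rw [← F2 (p := p) (U := U) (f := f) a]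
    exact Finset.single_le_sum (fun t' _ => hJ1n t' a) (Finset.mem_univ t)
  have h4 : JJ p U V f t a b ≤ Rm p U V a b := by
    rw [← F3 (p := p) (U := U) (V := V) (f := f) a b]
    exact Finset.single_le_sum (fun t' _ => hJn t' a b) (Finset.mem_univ t)
  exact ⟨hK1p, lt_of_lt_of_le hK1p h2, lt_of_lt_of_le hK1p h3, lt_of_lt_of_le h h4⟩


lemma term_split (hp : ∀ x, 0 ≤ p x) (hU : IsChannel U) (hV : IsChannel V)
    (t : γ) (a : A) (b : B) :
    JJ p U V f t a b * Real.logb 2 (JJ p U V f t a b / (Pim p f t * Rm p U V a b))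
      = JJ p U V f t a b * Real.logb 2 (J1 p U f t a / (Pim p f t * Pmarg p U a))
        + JJ p U V f t a b *
            Real.logb 2 (JJ p U V f t a b * Pmarg p U a / (J1 p U f t a * Rm p U V a b)) := by
  rcases eq_or_lt_of_le
      (JJ_nonneg (f := f) hp (fun x a => (hU x).1 a) (fun x b => (hV x).1 b) t a b)
    with h0 | hpos
  · rw [← h0]; ring
  · obtain ⟨h1, h2, h3, h4⟩ := pos_facts hp hU hV hpos
    have harg : JJ p U V f t a b / (Pim p f t * Rm p U V a b)
        = (J1 p U f t a / (Pim p f t * Pmarg p U a))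
          * (JJ p U V f t a b * Pmarg p U a / (J1 p U f t a * Rm p U V a b)) := by
      field_simp
    rw [harg, Real.logb_mul (by positivity) (by positivity), mul_add]

lemma cond_bound (hp : IsPMF p) (hU : IsChannel U) (hV : IsChannel V) {C : ℝ}
    (hC : ∀ q : Ω → ℝ, IsPMF q → mutualInfo (jointMapOut q V f) ≤ C) (a : A) :
    (∑ t, ∑ b, JJ p U V f t a b *
        Real.logb 2 (JJ p U V f t a b * Pmarg p U a / (J1 p U f t a * Rm p U V a b)))
      ≤ Pmarg p U a * C := by
  have hpn := hp.1
  have hUn : ∀ x a, 0 ≤ U x a := fun x a => (hU x).1 a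
  have hVn : ∀ x b, 0 ≤ V x b := fun x b => (hV x).1 b
  have hPan : 0 ≤ Pmarg p U a :=
    Finset.sum_nonneg fun x _ => mul_nonneg (hpn x) (hUn x a)
  rcases eq_or_lt_of_le hPan with hPa0 | hPap
  · -- degenerate row: everything vanishes
    have hpU : ∀ x, p x * U x a = 0 := by
      intro x
      exact (Finset.sum_eq_zero_iff_of_nonneg
        (fun x _ => mul_nonneg (hpn x) (hUn x a))).1 hPa0.symm x (Finset.mem_univ x)
    have hJ0 : ∀ t b, JJ p U V f t a b = 0 := by
      intro t b
      refine Finset.sum_eq_zero fun x _ => ?_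
      split_ifs
      · rw [← mul_assoc, hpU x, zero_mul]
      · rfl
    simp [hJ0, ← hPa0]
  · -- posterior distribution given the output a
    set q : Ω → ℝ := fun x => p x * U x a / Pmarg p U a with hqdef
    have hq : IsPMF q := by
      constructor
      · intro x
        exact div_nonneg (mul_nonneg (hpn x) (hUn x a)) hPan
      · rw [hqdef]
        simp only
        rw [← Finset.sum_div]
        exact div_self (ne_of_gt hPap)
    have hKd : jointMapOut q V f
        = fun z : γ × B => JJ p U V f z.1 a z.2 / Pmarg p U a := by
      funext z
      unfold jointMapOut JJ
      rw [Finset.sum_div]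
      refine Finset.sum_congr rfl fun x _ => ?_
      split_ifs
      · rw [hqdef]
        simp only
        rw [div_mul_eq_mul_div, mul_assoc]
      · rw [zero_div]
    have hMI : Pmarg p U a * mutualInfo (jointMapOut q V f)
        = ∑ t, ∑ b, JJ p U V f t a b *
            Real.logb 2 (JJ p U V f t a b * Pmarg p U a /
              (J1 p U f t a * Rm p U V a b)) := by
      rw [hKd]
      unfold mutualInfo
      rw [Finset.mul_sum]
      refine Finset.sum_congr rfl fun t _ => ?_
      rw [Finset.mul_sum]
      refine Finset.sum_congr rfl fun b _ => ?_
      simp only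
      rw [← Finset.sum_div, ← Finset.sum_div, F1 hV, F3]
      have harg : JJ p U V f t a b / Pmarg p U a /
          (J1 p U f t a / Pmarg p U a * (Rm p U V a b / Pmarg p U a))
          = JJ p U V f t a b * Pmarg p U a / (J1 p U f t a * Rm p U V a b) := by
        rcases eq_or_ne (J1 p U f t a) 0 with h1 | h1
        · simp [h1]
        rcases eq_or_ne (Rm p U V a b) 0 with h2 | h2
        · simp [h2]
        · field_simp
      rw [harg, ← mul_assoc, mul_div_cancel₀ _ (ne_of_gt hPap)]
    rw [← hMI]
    exact mul_le_mul_of_nonneg_left (hC q hq) hPan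

lemma Pmarg_sum_one (hp : IsPMF p) (hU : IsChannel U) :
    ∑ a, Pmarg p U a = 1 := by
  unfold Pmarg
  rw [Finset.sum_comm]
  have : ∀ x, ∑ a, p x * U x a = p x := by
    intro x
    rw [← Finset.mul_sum, (hU x).2, mul_one]
  simp_rw [this]
  exact hp.2


end facts

end CompAux

lemma chain_step {Ω γ A B : Type*} [Fintype Ω] [Fintype γ] [DecidableEq γ]
    [Fintype A] [Fintype B]
    (p : Ω → ℝ) (hp : IsPMF p) (U : Ω → A → ℝ) (hU : IsChannel U)
    (V : Ω → B → ℝ) (hV : IsChannel V) (f : Ω → γ) (C : ℝ)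
    (hC : ∀ q : Ω → ℝ, IsPMF q → mutualInfo (jointMapOut q V f) ≤ C) :
    mutualInfo (jointMapOut p (fun x (ab : A × B) => U x ab.1 * V x ab.2) f)
      ≤ mutualInfo (jointMapOut p U f) + C := by
  classical
  have hpn := hp.1
  have hJd : jointMapOut p (fun x (ab : A × B) => U x ab.1 * V x ab.2) f
      = fun z : γ × (A × B) => CompAux.JJ p U V f z.1 z.2.1 z.2.2 := rfl
  have hJ1d : jointMapOut p U f = fun z : γ × A => CompAux.J1 p U f z.1 z.2 := rfl
  rw [hJd, hJ1d]
  unfold mutualInfo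
  simp only
  simp_rw [CompAux.F5 hU hV, CompAux.F3, CompAux.F4 hU, CompAux.F2,
    Fintype.sum_prod_type]
  have hsplit : (∑ t, ∑ a, ∑ b, CompAux.JJ p U V f t a b *
        Real.logb 2 (CompAux.JJ p U V f t a b / (CompAux.Pim p f t * CompAux.Rm p U V a b)))
      = (∑ t, ∑ a, ∑ b, CompAux.JJ p U V f t a b *
          Real.logb 2 (CompAux.J1 p U f t a / (CompAux.Pim p f t * CompAux.Pmarg p U a)))
        + ∑ t, ∑ a, ∑ b, CompAux.JJ p U V f t a b *
            Real.logb 2 (CompAux.JJ p U V f t a b * CompAux.Pmarg p U a /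
              (CompAux.J1 p U f t a * CompAux.Rm p U V a b)) := by
    rw [← Finset.sum_add_distrib]
    refine Finset.sum_congr rfl fun t _ => ?_
    rw [← Finset.sum_add_distrib]
    refine Finset.sum_congr rfl fun a _ => ?_
    rw [← Finset.sum_add_distrib]
    exact Finset.sum_congr rfl fun b _ => CompAux.term_split hpn hU hV t a b
  have hfirst : (∑ t, ∑ a, ∑ b, CompAux.JJ p U V f t a b *
        Real.logb 2 (CompAux.J1 p U f t a / (CompAux.Pim p f t * CompAux.Pmarg p U a)))
      = ∑ t, ∑ a, CompAux.J1 p U f t a *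
          Real.logb 2 (CompAux.J1 p U f t a / (CompAux.Pim p f t * CompAux.Pmarg p U a)) :=
    Finset.sum_congr rfl fun t _ => Finset.sum_congr rfl fun a _ => by
      rw [← Finset.sum_mul, CompAux.F1 hV]
  have hsecond : (∑ t, ∑ a, ∑ b, CompAux.JJ p U V f t a b *
        Real.logb 2 (CompAux.JJ p U V f t a b * CompAux.Pmarg p U a /
          (CompAux.J1 p U f t a * CompAux.Rm p U V a b))) ≤ C := by
    rw [Finset.sum_comm]
    calc (∑ a, ∑ t, ∑ b, CompAux.JJ p U V f t a b *
          Real.logb 2 (CompAux.JJ p U V f t a b * CompAux.Pmarg p U a /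
            (CompAux.J1 p U f t a * CompAux.Rm p U V a b)))
        ≤ ∑ a, CompAux.Pmarg p U a * C :=
          Finset.sum_le_sum fun a _ => CompAux.cond_bound hp hU hV hC a
      _ = (∑ a, CompAux.Pmarg p U a) * C := (Finset.sum_mul _ _ _).symm
      _ = 1 * C := by rw [CompAux.Pmarg_sum_one hp hU]
      _ = C := one_mul C
  rw [hsplit, hfirst]
  exact add_le_add le_rfl hsecond

universe u

lemma comp_bound {Ω γ : Type*} [Fintype Ω] [Fintype γ] [DecidableEq γ] (f : Ω → γ) :
    ∀ (m : ℕ) (𝒴 : Fin m → Type u) [∀ j, Fintype (𝒴 j)]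
      (W : ∀ j, Ω → 𝒴 j → ℝ) (C : Fin m → ℝ),
      (∀ j, IsChannel (W j)) →
      (∀ (j) (q : Ω → ℝ), IsPMF q → mutualInfo (jointMapOut q (W j) f) ≤ C j) →
      ∀ p : Ω → ℝ, IsPMF p →
        mutualInfo (jointMapOut p (fun x (y : ∀ j, 𝒴 j) => ∏ j, W j x (y j)) f)
          ≤ ∑ j, C j := by
  intro m
  induction m with
  | zero =>
    intro 𝒴 inst W C hW hC p hp
    haveI : Unique (∀ j : Fin 0, 𝒴 j) :=
      ⟨⟨fun j => j.elim0⟩, fun y => funext fun j => j.elim0⟩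
    have hzero : mutualInfo
        (jointMapOut p (fun x (y : ∀ j : Fin 0, 𝒴 j) => ∏ j, W j x (y j)) f) = 0 := by
      unfold mutualInfo
      refine Finset.sum_eq_zero fun t _ => Finset.sum_eq_zero fun y _ => ?_
      have h1 : (∑ b' : (∀ j : Fin 0, 𝒴 j),
          jointMapOut p (fun x y => ∏ j, W j x (y j)) f (t, b'))
          = jointMapOut p (fun x y => ∏ j, W j x (y j)) f (t, y) := by
        rw [Fintype.sum_unique]
        exact congrArg _ (congrArg _ (Subsingleton.elim _ _))
      have h2 : (∑ t' : γ, jointMapOut p (fun x y => ∏ j, W j x (y j)) f (t', y)) = 1 := by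
        unfold jointMapOut
        rw [Finset.sum_comm]
        have : ∀ x : Ω, (∑ t' : γ, if f x = t' then p x * ∏ j : Fin 0, W j x (y j) else 0)
            = p x := by
          intro x
          simp
        simp_rw [this]
        exact hp.2
      rw [h1, h2, mul_one]
      rcases eq_or_ne (jointMapOut p (fun x y => ∏ j, W j x (y j)) f (t, y)) 0 with h | h
      · rw [h, zero_mul]
      · rw [div_self h, Real.logb_one, mul_zero]
    rw [hzero]
    simp
  | succ m ih =>
    intro 𝒴 inst W C hW hC p hp
    letI : ∀ j : Fin m, Fintype (𝒴 j.succ) := fun j => inst j.succ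
    have hUch : IsChannel (fun x (a : ∀ j : Fin m, 𝒴 j.succ) => ∏ j, W j.succ x (a j)) := by
      intro x
      constructor
      · intro a
        exact Finset.prod_nonneg fun j _ => (hW j.succ x).1 _
      · have h1 : (∑ a : (∀ j : Fin m, 𝒴 j.succ), ∏ j, W j.succ x (a j))
            = ∏ j : Fin m, ∑ y, W j.succ x y := by
          rw [Finset.prod_univ_sum, Fintype.piFinset_univ]
        rw [h1]
        exact Finset.prod_eq_one fun j _ => (hW j.succ x).2
    let e : ((∀ j : Fin m, 𝒴 j.succ) × 𝒴 0) ≃ (∀ j, 𝒴 j) :=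
      (Equiv.prodComm _ _).trans (Fin.consEquiv 𝒴)
    have hfun : (fun z : γ × ((∀ j : Fin m, 𝒴 j.succ) × 𝒴 0) =>
          jointMapOut p (fun x (y : ∀ j, 𝒴 j) => ∏ j, W j x (y j)) f (z.1, e z.2))
        = jointMapOut p
            (fun x (z : (∀ j : Fin m, 𝒴 j.succ) × 𝒴 0) =>
              (fun x (a : ∀ j : Fin m, 𝒴 j.succ) => ∏ j, W j.succ x (a j)) x z.1
                * W 0 x z.2) f := by
      funext z
      unfold jointMapOut
      refine Finset.sum_congr rfl fun x _ => ?_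
      simp only
      have he : e z.2 = Fin.cons z.2.2 z.2.1 := rfl
      rw [he]
      have hprod : (∏ j, W j x (Fin.cons z.2.2 z.2.1 j))
          = (∏ j : Fin m, W j.succ x (z.2.1 j)) * W 0 x z.2.2 := by
        rw [Fin.prod_univ_succ]
        simp only [Fin.cons_zero, Fin.cons_succ]
        ring
      rw [hprod]
    have hrel : mutualInfo (jointMapOut p (fun x (y : ∀ j, 𝒴 j) => ∏ j, W j x (y j)) f)
        = mutualInfo (jointMapOut p
            (fun x (z : (∀ j : Fin m, 𝒴 j.succ) × 𝒴 0) =>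
              (fun x (a : ∀ j : Fin m, 𝒴 j.succ) => ∏ j, W j.succ x (a j)) x z.1
                * W 0 x z.2) f) := by
      rw [← mutualInfo_relabel
        (jointMapOut p (fun x (y : ∀ j, 𝒴 j) => ∏ j, W j x (y j)) f) e, hfun]
    rw [hrel]
    have tail := ih (fun j => 𝒴 j.succ) (fun j => W j.succ) (fun j => C j.succ)
      (fun j => hW j.succ) (fun j q hq => hC j.succ q hq) p hp
    have step := chain_step p hp
      (fun x (a : ∀ j : Fin m, 𝒴 j.succ) => ∏ j, W j.succ x (a j)) hUch
      (W 0) (hW 0) f (C 0) (fun q hq => hC 0 q hq)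
    rw [Fin.sum_univ_succ]
    calc _ ≤ mutualInfo (jointMapOut p
          (fun x (a : ∀ j : Fin m, 𝒴 j.succ) => ∏ j, W j.succ x (a j)) f) + C 0 := step
      _ ≤ (∑ j : Fin m, C j.succ) + C 0 := add_le_add tail le_rfl
      _ = C 0 + ∑ j : Fin m, C j.succ := add_comm _ _

/-- Theorem 1: if channel `j` is `(b,δ_j)`-balanced and satisfies
`ε_j`-information privacy with respect to `ℙ_b` for each `j ∈ [m]`, then the composed
channel `p(y|x) = ∏_j p(y_j|x)` satisfies `(Σ_j δ_j)`-composition privacy w.r.t. `ℙ_b`: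
its individual channel capacity w.r.t. `ℙ_b` is at most `Σ_j ε_j + Σ_j δ_j`. -/
theorem basic_composition_balanced
    {n m : ℕ} {𝒳 : Fin n → Type*} [∀ i, Fintype (𝒳 i)] [∀ i, DecidableEq (𝒳 i)]
    [∀ i, Nonempty (𝒳 i)] {𝒴 : Fin m → Type*} [∀ j, Fintype (𝒴 j)] [∀ j, Nonempty (𝒴 j)]
    (W : ∀ j, (∀ i, 𝒳 i) → 𝒴 j → ℝ) (hW : ∀ j, IsChannel (W j))
    (b : ℝ) (hb : 0 ≤ b) (ε δ : Fin m → ℝ) (hε : ∀ j, 0 ≤ ε j) (hδ : ∀ j, 0 ≤ δ j)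
    (hbal : ∀ j, indCap (W j) (allPMF (∀ i, 𝒳 i)) =
      indCap (W j) (PMFb (∀ i, 𝒳 i) b) + δ j)
    (hip : ∀ j, indCap (W j) (PMFb (∀ i, 𝒳 i) b) ≤ ε j) :
    indCap (fun x (y : ∀ j, 𝒴 j) => ∏ j, W j x (y j)) (PMFb (∀ i, 𝒳 i) b) ≤
      (∑ j, ε j) + ∑ j, δ j := by
  unfold indCap
  apply Real.sSup_le
  · rintro r ⟨p, hp, i, rfl⟩
    have key : ∀ (j : Fin m) (q : (∀ i, 𝒳 i) → ℝ), IsPMF q →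
        mutualInfo (jointMapOut q (W j) (fun x => x i)) ≤ ε j + δ j := by
      intro j q hq
      have hbdd : BddAbove {r | ∃ p ∈ allPMF (∀ i, 𝒳 i), ∃ i : Fin n,
          r = mutualInfo (jointMapOut p (W j) (fun x => x i))} := by
        refine ⟨(Fintype.card (𝒴 j) : ℝ) * ((Real.exp 1) * Real.log 2)⁻¹, ?_⟩
        rintro r ⟨p', hp', i', rfl⟩
        exact mutualInfo_le_bound _
          (jointMapOut_nonneg hp'.1 (fun x y => (hW j x).1 y) _)
      have h1 : mutualInfo (jointMapOut q (W j) (fun x => x i))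
          ≤ indCap (W j) (allPMF (∀ i, 𝒳 i)) := le_csSup hbdd ⟨q, hq, i, rfl⟩
      calc mutualInfo (jointMapOut q (W j) (fun x => x i))
          ≤ indCap (W j) (allPMF (∀ i, 𝒳 i)) := h1
        _ = indCap (W j) (PMFb (∀ i, 𝒳 i) b) + δ j := hbal j
        _ ≤ ε j + δ j := add_le_add (hip j) le_rfl
    have hmain := comp_bound (fun x => x i) m 𝒴 W (fun j => ε j + δ j) hW key p hp.1
    calc mutualInfo (jointMapOut p (fun x (y : ∀ j, 𝒴 j) => ∏ j, W j x (y j))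
          (fun x => x i)) ≤ ∑ j, (ε j + δ j) := hmain
      _ = (∑ j, ε j) + ∑ j, δ j := Finset.sum_add_distrib
  · have h1 : 0 ≤ ∑ j, ε j := Finset.sum_nonneg fun j _ => hε j
    have h2 : 0 ≤ ∑ j, δ j := Finset.sum_nonneg fun j _ => hδ j
    linarith
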